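/- Let d = 2, let D_0 ≥ 1 and let D_j = 6^j·D_0 for every j ≥ 1. For every n ≥ 1 and every A ⊆ Z_n^2 with |A| ≥ 288·n²/D_0², there exists J ∈ ℕ and a (1, D)-dormitory hierarchy (A_j, C_j)_{j ≤ J} on A such that |A_J| ≥ |A| − 144·n²/D_0² and the partition C_0 contains only singletons. -/

import Mathlib

/-- The distance on the torus `(ℤ/nℤ)^d`: the infimum of the sup-norm distances between
integer lifts of the two points. -/
noncomputable def torusDist {d n : ℕ} (x y : Fin d → ZMod n) : ℕ :=
  sInf {k : ℕ | ∃ a b : Fin d → ℤ,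
    (∀ i, (a i : ZMod n) = x i) ∧ (∀ i, (b i : ZMod n) = y i) ∧
    (Finset.univ.sup fun i => (a i - b i).natAbs) = k}

/-- The closed ball of radius `r` around `x` in the torus `(ℤ/nℤ)^d`. -/
def torusBall {d n : ℕ} (x : Fin d → ZMod n) (r : ℕ) : Set (Fin d → ZMod n) :=
  {y | torusDist x y ≤ r}

/-- A set `C ⊆ (ℤ/nℤ)^d` is `r`-connected if any two of its points can be joined by a
finite sequence of points of `C` whose consecutive terms are at distance at most `r`. -/
def torusRConnected {d n : ℕ} (r : ℕ) (C : Set (Fin d → ZMod n)) : Prop :=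
  ∀ x ∈ C, ∀ y ∈ C, ∃ (k : ℕ) (f : ℕ → Fin d → ZMod n),
    f 0 = x ∧ f k = y ∧ (∀ j ≤ k, f j ∈ C) ∧ ∀ j < k, torusDist (f j) (f (j + 1)) ≤ r

/-- The diameter of a subset of the torus `(ℤ/nℤ)^d`. -/
noncomputable def torusDiam {d n : ℕ} (C : Set (Fin d → ZMod n)) : ℕ :=
  sSup {k : ℕ | ∃ x ∈ C, ∃ y ∈ C, torusDist x y = k}

/-- `𝒞` is a partition of the set `A`: its members are non-empty, pairwise disjoint,
and their union is `A`. -/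
def IsPartitionOf {α : Type*} (𝒞 : Set (Set α)) (A : Set α) : Prop :=
  (∀ C ∈ 𝒞, C.Nonempty) ∧ ⋃₀ 𝒞 = A ∧
    ∀ C ∈ 𝒞, ∀ C' ∈ 𝒞, C ≠ C' → Disjoint C C'

/-- A `(v, D)`-dormitory hierarchy on a set `A ⊆ (ℤ/nℤ)^d`: a decreasing sequence of
subsets `A ⊇ A_0 ⊇ ⋯ ⊇ A_J` together with partitions `𝒞_j` of `A_j` such that:
(i) every cluster `C ∈ 𝒞_j` satisfies `|C| ≥ 2^⌊j/2⌋ v`;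
(ii) every cluster `C ∈ 𝒞_{j+1} \ 𝒞_j` has diameter at most `D j` and is the union of
two clusters of `𝒞_j`;
(iii) the last partition `𝒞_J` consists of a single set. -/
structure DormitoryHierarchy (d n v : ℕ) (D : ℕ → ℕ) (A : Set (Fin d → ZMod n)) where
  J : ℕ
  level : ℕ → Set (Fin d → ZMod n)
  part : ℕ → Set (Set (Fin d → ZMod n))
  level_zero_subset : level 0 ⊆ A
  level_antitone : ∀ j, j + 1 ≤ J → level (j + 1) ⊆ level j
  part_isPartition : ∀ j ≤ J, IsPartitionOf (part j) (level j)
  card_ge : ∀ j ≤ J, ∀ C ∈ part j, 2 ^ (j / 2) * v ≤ C.ncard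
  merge : ∀ j, j + 1 ≤ J → ∀ C ∈ part (j + 1), C ∉ part j →
    torusDiam C ≤ D j ∧ ∃ C₀ ∈ part j, ∃ C₁ ∈ part j, C = C₀ ∪ C₁
  final : ∃ C, part J = {C}

/-!
Start from the singletons of `A`. At step `j`, cut the torus into boxes of side `D₀`
(for `j = 0`) or `4 · 6^(j-1) D₀`, locate each cluster by a representative point, and inside each
box merge the clusters, sorted by size, in consecutive pairs. Clusters of level `j ≥ 1` have
diameter at most `6^(j-1) D₀` and at least `2^⌊j/2⌋` points, so a merged pair has diameter at most
`2 · 6^(j-1) D₀ + 4 · 6^(j-1) D₀ = 6^j D₀` and enough points for level `j + 1`. An unpaired cluster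
that is too small is discarded: fewer than `2^j` points in each of the `O((n / 6^j D₀)²)` boxes,
which sums to less than `25 n² / D₀²`. Once a single box covers the torus, the only small cluster
is the leftover of the previous step; sorting pairs it first, so nothing more is lost, and the
number of clusters halves at each step until one is left, non-empty because `|A|` exceeds the loss.
-/

open Finset

section TorusDist

variable {d n : ℕ}

theorem torusDist_le_of_lifts {x y : Fin d → ZMod n} (a b : Fin d → ℤ)
    (ha : ∀ i, (a i : ZMod n) = x i) (hb : ∀ i, (b i : ZMod n) = y i) {k : ℕ}
    (h : ∀ i, (a i - b i).natAbs ≤ k) : torusDist x y ≤ k :=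
  le_trans (Nat.sInf_le ⟨a, b, ha, hb, rfl⟩) (Finset.sup_le fun i _ => h i)

theorem exists_lifts_torusDist [NeZero n] (x y : Fin d → ZMod n) :
    ∃ a b : Fin d → ℤ, (∀ i, (a i : ZMod n) = x i) ∧ (∀ i, (b i : ZMod n) = y i) ∧
      ∀ i, (a i - b i).natAbs ≤ torusDist x y := by
  obtain ⟨a, b, ha, hb, hab⟩ : torusDist x y ∈ {k | ∃ a b : Fin d → ℤ,
      (∀ i, (a i : ZMod n) = x i) ∧ (∀ i, (b i : ZMod n) = y i) ∧
      (univ.sup fun i => (a i - b i).natAbs) = k} :=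
    Nat.sInf_mem ⟨_, fun i => ((x i).val : ℤ), fun i => ((y i).val : ℤ), fun i => by simp,
      fun i => by simp, rfl⟩
  exact ⟨a, b, ha, hb, fun i => hab ▸ le_sup (f := fun i => (a i - b i).natAbs) (mem_univ i)⟩

theorem torusDist_comm (x y : Fin d → ZMod n) : torusDist x y = torusDist y x := by
  unfold torusDist
  congr 1
  ext k
  constructor <;> rintro ⟨a, b, ha, hb, rfl⟩ <;>
    exact ⟨b, a, hb, ha, sup_congr rfl fun i _ => by rw [← Int.natAbs_neg, neg_sub]⟩

theorem torusDist_triangle [NeZero n] (x y z : Fin d → ZMod n) :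
    torusDist x z ≤ torusDist x y + torusDist y z := by
  obtain ⟨a, b, ha, hb, hab⟩ := exists_lifts_torusDist x y
  obtain ⟨b', c, hb', hc, hbc⟩ := exists_lifts_torusDist y z
  -- shift the lift of `z` so that it sits next to the lift `b` of `y`
  refine torusDist_le_of_lifts a (fun i => c i + (b i - b' i)) ha (fun i => ?_) fun i => ?_
  · push_cast
    rw [hc, hb, hb', sub_self, add_zero]
  · calc (a i - (c i + (b i - b' i))).natAbs = ((a i - b i) + (b' i - c i)).natAbs := by ring_nf
      _ ≤ (a i - b i).natAbs + (b' i - c i).natAbs := Int.natAbs_add_le _ _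
      _ ≤ _ := Nat.add_le_add (hab i) (hbc i)

theorem torusDist_self [NeZero n] (x : Fin d → ZMod n) : torusDist x x = 0 :=
  Nat.le_zero.mp <| torusDist_le_of_lifts (fun i => ((x i).val : ℤ)) (fun i => ((x i).val : ℤ))
    (fun i => by simp) (fun i => by simp) fun i => by simp

theorem torusDist_le_of_div_eq [NeZero n] {x y : Fin d → ZMod n} {b : ℕ} (hb : 0 < b)
    (h : ∀ i, (x i).val / b = (y i).val / b) : torusDist x y ≤ b - 1 := by
  refine torusDist_le_of_lifts (fun i => ((x i).val : ℤ)) (fun i => ((y i).val : ℤ))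
    (fun i => by simp) (fun i => by simp) fun i => ?_
  have hx := Nat.div_add_mod (x i).val b
  have hy := Nat.div_add_mod (y i).val b
  have := Nat.mod_lt (x i).val hb
  have := Nat.mod_lt (y i).val hb
  rw [h i] at hx
  omega

theorem torusDiam_le {C : Set (Fin d → ZMod n)} {k : ℕ}
    (h : ∀ x ∈ C, ∀ y ∈ C, torusDist x y ≤ k) : torusDiam C ≤ k :=
  csSup_le' <| by rintro m ⟨x, hx, y, hy, rfl⟩; exact h x hx y hy

theorem torusDist_le_of_mem_union [NeZero n] {C C' : Finset (Fin d → ZMod n)} {E s : ℕ}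
    (hC : ∀ x ∈ C, ∀ y ∈ C, torusDist x y ≤ E) (hC' : ∀ x ∈ C', ∀ y ∈ C', torusDist x y ≤ E)
    {x₀ y₀ : Fin d → ZMod n} (hx₀ : x₀ ∈ C) (hy₀ : y₀ ∈ C') (h₀ : torusDist x₀ y₀ ≤ s) :
    ∀ x ∈ C ∪ C', ∀ y ∈ C ∪ C', torusDist x y ≤ 2 * E + s := by
  have across : ∀ x ∈ C, ∀ y ∈ C', torusDist x y ≤ 2 * E + s := fun x hx y hy =>
    calc torusDist x y ≤ torusDist x x₀ + torusDist x₀ y := torusDist_triangle _ _ _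
      _ ≤ torusDist x x₀ + (torusDist x₀ y₀ + torusDist y₀ y) :=
          Nat.add_le_add_left (torusDist_triangle _ _ _) _
      _ ≤ E + (s + E) := add_le_add (hC x hx x₀ hx₀) (add_le_add h₀ (hC' y₀ hy₀ y hy))
      _ = 2 * E + s := by ring
  simp only [mem_union]
  rintro x (hx | hx) y (hy | hy)
  · exact (hC x hx y hy).trans (by omega)
  · exact across x hx y hy
  · exact torusDist_comm x y ▸ across y hy x hx
  · exact (hC' x hx y hy).trans (by omega)

end TorusDist

theorem isPartitionOf_of_pairwise_disjoint {α : Type*} {l : List (Finset α)}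
    (hne : ∀ C ∈ l, C.Nonempty) (hl : l.Pairwise Disjoint) :
    IsPartitionOf {S | ∃ C ∈ l, (C : Set α) = S} {x | ∃ C ∈ l, x ∈ C} := by
  refine ⟨?_, ?_, ?_⟩
  · rintro _ ⟨C, hC, rfl⟩
    exact coe_nonempty.mpr (hne C hC)
  · ext x
    simp
  · rintro _ ⟨C, hC, rfl⟩ _ ⟨C', hC', rfl⟩ hCC'
    exact disjoint_coe.mpr (hl.forall hC hC' fun h => hCC' (h ▸ rfl))

namespace DormitoryHierarchy

variable {d n v : ℕ} {D : ℕ → ℕ} {A : Set (Fin d → ZMod n)}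

def ofLists (L : ℕ → List (Finset (Fin d → ZMod n))) (J : ℕ) (hv : 0 < v)
    (hA : ∀ C ∈ L 0, (C : Set (Fin d → ZMod n)) ⊆ A) (hdisj : ∀ j, (L j).Pairwise Disjoint)
    (hcard : ∀ j, ∀ C ∈ L j, 2 ^ (j / 2) * v ≤ C.card)
    (hmerge : ∀ j, ∀ C ∈ L (j + 1), C ∈ L j ∨
      torusDiam (C : Set (Fin d → ZMod n)) ≤ D j ∧ ∃ a ∈ L j, ∃ a' ∈ L j, C = a ∪ a')
    (hJ : (L J).length = 1) : DormitoryHierarchy d n v D A where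
  J := J
  level j := {x | ∃ C ∈ L j, x ∈ C}
  part j := {S | ∃ C ∈ L j, (C : Set (Fin d → ZMod n)) = S}
  level_zero_subset := fun x ⟨C, hC, hx⟩ => hA C hC hx
  level_antitone j _ := fun x ⟨C, hC, hx⟩ => by
    rcases hmerge j C hC with hC' | ⟨-, a, ha, a', ha', rfl⟩
    · exact ⟨C, hC', hx⟩
    · rcases mem_union.mp hx with hx | hx
      exacts [⟨a, ha, hx⟩, ⟨a', ha', hx⟩]
  part_isPartition j _ := isPartitionOf_of_pairwise_disjoint
    (fun C hC => card_pos.mp <| (by positivity : 0 < 2 ^ (j / 2) * v).trans_le (hcard j C hC))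
    (hdisj j)
  card_ge j _ := by
    rintro _ ⟨C, hC, rfl⟩
    rw [Set.ncard_coe_finset]
    exact hcard j C hC
  merge j _ := by
    rintro _ ⟨C, hC, rfl⟩ hnew
    rcases hmerge j C hC with hC' | ⟨hdiam, a, ha, a', ha', rfl⟩
    · exact absurd ⟨C, hC', rfl⟩ hnew
    · exact ⟨hdiam, a, ⟨a, ha, rfl⟩, a', ⟨a', ha', rfl⟩, coe_union a a'⟩
  final := by
    obtain ⟨C, hC⟩ := List.length_eq_one_iff.mp hJ
    exact ⟨C, by simp [hC]⟩

end DormitoryHierarchy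

theorem List.flatMap_eq_of_ne_eq_nil {β γ : Type*} {L : List β} {f : β → List γ} {k₀ : β}
    (hL : L.Nodup) (hk₀ : k₀ ∈ L) (hf : ∀ k ≠ k₀, f k = []) : L.flatMap f = f k₀ := by
  induction L with
  | nil => simp at hk₀
  | cons k L ih =>
    obtain ⟨hk, hL⟩ := List.nodup_cons.mp hL
    rw [List.flatMap_cons]
    by_cases h : k = k₀
    · subst h
      rw [List.flatMap_eq_nil_iff.mpr fun k' hk' => hf k' (ne_of_mem_of_not_mem hk' hk),
        List.append_nil]
    · rw [hf k h, ih hL (by simpa [Ne.symm h] using hk₀), List.nil_append]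

namespace Dormitory

section Pairing

variable {α : Type*}

def mass (l : List (Finset α)) : ℕ := (l.map Finset.card).sum

@[simp] theorem mass_nil : mass ([] : List (Finset α)) = 0 := rfl

@[simp] theorem mass_cons (C : Finset α) (l : List (Finset α)) :
    mass (C :: l) = C.card + mass l := by
  simp [mass]

theorem mass_eq_of_perm {l l' : List (Finset α)} (h : l.Perm l') : mass l = mass l' :=
  (h.map _).sum_eq

theorem mass_eq_sum_mass_filter {β : Type*} [DecidableEq β] (f : Finset α → β) (s : Finset β) :
    ∀ l : List (Finset α), (∀ C ∈ l, f C ∈ s) →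
      mass l = ∑ k ∈ s, mass (l.filter fun C => f C = k)
  | [], _ => by simp
  | C :: l, h => by
    have ih := mass_eq_sum_mass_filter f s l fun C' hC' => h C' (by simp [hC'])
    have hsplit : ∀ k, mass ((C :: l).filter fun C' => f C' = k) =
        (if f C = k then C.card else 0) + mass (l.filter fun C' => f C' = k) := by
      intro k
      by_cases hk : f C = k <;> simp [hk]
    rw [sum_congr rfl fun k _ => hsplit k, sum_add_distrib, sum_ite_eq, if_pos (h C (by simp)),
      ← ih, mass_cons]

def sortByCard (l : List (Finset α)) : List (Finset α) :=
  l.mergeSort fun a b => a.card ≤ b.card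

theorem sortByCard_perm (l : List (Finset α)) : (sortByCard l).Perm l :=
  List.mergeSort_perm _ _

@[simp] theorem length_sortByCard (l : List (Finset α)) : (sortByCard l).length = l.length :=
  List.length_mergeSort _

theorem pairwise_sortByCard (l : List (Finset α)) :
    (sortByCard l).Pairwise fun a b => a.card ≤ b.card := by
  simpa [sortByCard] using
    List.pairwise_mergeSort (le := fun a b : Finset α => decide (a.card ≤ b.card))
    (fun a b c => by simpa using le_trans) (fun a b => by simpa using le_total _ _) l

theorem pairwise_disjoint_sortByCard {l : List (Finset α)} (hl : l.Pairwise Disjoint) :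
    (sortByCard l).Pairwise Disjoint :=
  (sortByCard_perm l).pairwise_iff (fun h => h.symm) |>.mpr hl

variable [DecidableEq α]

def pairUp (t : ℕ) : List (Finset α) → List (Finset α)
  | a :: b :: l => (a ∪ b) :: pairUp t l
  | [a] => if t ≤ a.card then [a] else []
  | [] => []

variable {t : ℕ}

theorem mem_pairUp {l : List (Finset α)} {C : Finset α} (hC : C ∈ pairUp t l) :
    C ∈ l ∨ ∃ a ∈ l, ∃ b ∈ l, C = a ∪ b := by
  fun_induction pairUp t l with
  | case1 a b l ih =>
    rcases List.mem_cons.mp hC with rfl | hC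
    · exact Or.inr ⟨a, by simp, b, by simp, rfl⟩
    · rcases ih hC with hC | ⟨a', ha', b', hb', rfl⟩
      · exact Or.inl (by simp [hC])
      · exact Or.inr ⟨a', by simp [ha'], b', by simp [hb'], rfl⟩
  | case2 => exact Or.inl hC
  | case3 | case4 => simp at hC

theorem exists_mem_of_mem_pairUp {l : List (Finset α)} {C : Finset α} (hC : C ∈ pairUp t l)
    {x : α} (hx : x ∈ C) : ∃ a ∈ l, x ∈ a := by
  rcases mem_pairUp hC with hC | ⟨a, ha, b, hb, rfl⟩
  · exact ⟨C, hC, hx⟩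
  · rcases mem_union.mp hx with hx | hx
    exacts [⟨a, ha, hx⟩, ⟨b, hb, hx⟩]

theorem pairwise_disjoint_pairUp {l : List (Finset α)} (hl : l.Pairwise Disjoint) :
    (pairUp t l).Pairwise Disjoint := by
  fun_induction pairUp t l with
  | case1 a b l ih =>
    simp only [List.pairwise_cons, List.mem_cons, forall_eq_or_imp] at hl
    refine List.pairwise_cons.mpr ⟨fun C hC => disjoint_left.mpr fun x hx hxC => ?_, ih hl.2.2⟩
    obtain ⟨c, hc, hxc⟩ := exists_mem_of_mem_pairUp hC hxC
    rcases mem_union.mp hx with hx | hx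
    · exact disjoint_left.mp (hl.1.2 c hc) hx hxc
    · exact disjoint_left.mp (hl.2.1 c hc) hx hxc
  | case2 | case3 | case4 => simp

theorem card_le_of_mem_pairUp {r : ℕ} (ht : t ≤ 2 * r) {l : List (Finset α)}
    (hl : l.Pairwise Disjoint) (hr : ∀ C ∈ l, r ≤ C.card) : ∀ C ∈ pairUp t l, t ≤ C.card := by
  fun_induction pairUp t l with
  | case1 a b l ih =>
    simp only [List.pairwise_cons, List.mem_cons, forall_eq_or_imp] at hl hr
    rintro C (_ | ⟨_, hC⟩)
    · rw [card_union_of_disjoint hl.1.1]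
      omega
    · exact ih hl.2.2 hr.2.2 C hC
  | case2 => simpa
  | case3 | case4 => simp

theorem mass_le_mass_pairUp_add {l : List (Finset α)} (hl : l.Pairwise Disjoint) :
    mass l ≤ mass (pairUp t l) + (t - 1) := by
  fun_induction pairUp t l with
  | case1 a b l ih =>
    simp only [List.pairwise_cons, List.mem_cons, forall_eq_or_imp] at hl
    have := ih hl.2.2
    simp only [mass_cons, card_union_of_disjoint hl.1.1]
    omega
  | case2 | case4 => simp
  | case3 => simp; omega

theorem mass_pairUp {l : List (Finset α)} (hl : l.Pairwise Disjoint)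
    (hlast : ∀ h : l ≠ [], t ≤ (l.getLast h).card) : mass (pairUp t l) = mass l := by
  fun_induction pairUp t l with
  | case1 a b l ih =>
    simp only [List.pairwise_cons, List.mem_cons, forall_eq_or_imp] at hl
    have : mass (pairUp t l) = mass l :=
      ih hl.2.2 fun h => by simpa [List.getLast_cons h] using hlast (by simp)
    simp [this, card_union_of_disjoint hl.1.1, add_assoc]
  | case2 | case4 => rfl
  | case3 a h => exact absurd (by simpa using hlast) h

theorem length_pairUp_le (l : List (Finset α)) : (pairUp t l).length ≤ (l.length + 1) / 2 := by
  fun_induction pairUp t l with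
  | case1 a b l ih => simp only [List.length_cons]; omega
  | case2 | case3 | case4 => simp

theorem mass_pairUp_sortByCard {l : List (Finset α)} (hl : l.Pairwise Disjoint)
    (hbig : ∃ C ∈ l, t ≤ C.card) : mass (pairUp t (sortByCard l)) = mass l := by
  obtain ⟨C, hC, htC⟩ := hbig
  rw [← mass_eq_of_perm (sortByCard_perm l)]
  refine mass_pairUp (pairwise_disjoint_sortByCard hl) fun h => htC.trans ?_
  exact (pairwise_sortByCard l).rel_getLast_of_rel_getLast_getLast
    ((sortByCard_perm l).mem_iff.mpr hC) le_rfl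

end Pairing

section Boxes

variable {d n : ℕ}

noncomputable def rep (C : Finset (Fin d → ZMod n)) : Fin d → ZMod n :=
  Classical.epsilon (· ∈ C)

theorem rep_mem {C : Finset (Fin d → ZMod n)} (h : C.Nonempty) : rep C ∈ C :=
  Classical.epsilon_spec h

def boxOf (b : ℕ) (x : Fin d → ZMod n) : Fin d → ℕ := fun i => (x i).val / b

def boxes (n b d : ℕ) : Finset (Fin d → ℕ) := Fintype.piFinset fun _ => range (n / b + 1)

theorem boxOf_mem_boxes [NeZero n] (b : ℕ) (x : Fin d → ZMod n) : boxOf b x ∈ boxes n b d :=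
  Fintype.mem_piFinset.mpr fun i =>
    mem_range.mpr <| Nat.lt_succ_of_le <| Nat.div_le_div_right (ZMod.val_lt (x i)).le

theorem card_boxes (n b d : ℕ) : (boxes n b d).card = (n / b + 1) ^ d := by
  simp [boxes]

theorem boxOf_of_le [NeZero n] {b : ℕ} (hb : n ≤ b) (x : Fin d → ZMod n) : boxOf b x = 0 :=
  funext fun i => Nat.div_eq_of_lt <| (ZMod.val_lt (x i)).trans_le hb

/-- Sorting makes the cluster of a box that is left unpaired the largest one. -/
noncomputable def boxPairStep (b t : ℕ) (l : List (Finset (Fin d → ZMod n))) :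
    List (Finset (Fin d → ZMod n)) :=
  (boxes n b d).toList.flatMap fun k =>
    pairUp t (sortByCard (l.filter fun C => boxOf b (rep C) = k))

variable {b t : ℕ} {l : List (Finset (Fin d → ZMod n))}

theorem mem_boxPairStep {C : Finset (Fin d → ZMod n)} :
    C ∈ boxPairStep b t l ↔
      ∃ k ∈ boxes n b d, C ∈ pairUp t (sortByCard (l.filter fun C => boxOf b (rep C) = k)) := by
  simp [boxPairStep]

theorem mem_of_mem_sortByCard_filter {k : Fin d → ℕ} {C : Finset (Fin d → ZMod n)}
    (hC : C ∈ sortByCard (l.filter fun C => boxOf b (rep C) = k)) :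
    C ∈ l ∧ boxOf b (rep C) = k := by
  simpa using (sortByCard_perm _).mem_iff.mp hC

theorem mem_or_eq_union_of_mem_boxPairStep {C : Finset (Fin d → ZMod n)}
    (hC : C ∈ boxPairStep b t l) :
    C ∈ l ∨ ∃ a ∈ l, ∃ a' ∈ l, boxOf b (rep a) = boxOf b (rep a') ∧ C = a ∪ a' := by
  obtain ⟨k, -, hC⟩ := mem_boxPairStep.mp hC
  rcases mem_pairUp hC with hC | ⟨a, ha, a', ha', rfl⟩
  · exact .inl (mem_of_mem_sortByCard_filter hC).1
  · obtain ⟨hal, rfl⟩ := mem_of_mem_sortByCard_filter ha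
    obtain ⟨ha'l, hk⟩ := mem_of_mem_sortByCard_filter ha'
    exact .inr ⟨a, hal, a', ha'l, hk.symm, rfl⟩

theorem pairwise_disjoint_boxPairStep (hl : l.Pairwise Disjoint) :
    (boxPairStep b t l).Pairwise Disjoint := by
  refine List.pairwise_flatMap.mpr ⟨fun k _ => pairwise_disjoint_pairUp
    (pairwise_disjoint_sortByCard (hl.sublist List.filter_sublist)), ?_⟩
  refine (nodup_toList _).imp fun {k k'} hkk' C hC C' hC' => disjoint_left.mpr fun x hx hx' => ?_
  obtain ⟨a, ha, hxa⟩ := exists_mem_of_mem_pairUp hC hx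
  obtain ⟨a', ha', hxa'⟩ := exists_mem_of_mem_pairUp hC' hx'
  obtain ⟨hal, rfl⟩ := mem_of_mem_sortByCard_filter ha
  obtain ⟨ha'l, rfl⟩ := mem_of_mem_sortByCard_filter ha'
  have hne : a ≠ a' := fun h => hkk' (h ▸ rfl)
  exact disjoint_left.mp (hl.forall hal ha'l hne) hxa hxa'

theorem card_le_of_mem_boxPairStep {r : ℕ} (ht : t ≤ 2 * r) (hl : l.Pairwise Disjoint)
    (hr : ∀ C ∈ l, r ≤ C.card) : ∀ C ∈ boxPairStep b t l, t ≤ C.card := by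
  intro C hC
  obtain ⟨k, -, hC⟩ := mem_boxPairStep.mp hC
  exact card_le_of_mem_pairUp ht (pairwise_disjoint_sortByCard (hl.sublist List.filter_sublist))
    (fun C' hC' => hr C' (mem_of_mem_sortByCard_filter hC').1) C hC

theorem torusDist_le_of_mem_boxPairStep [NeZero n] (hb : 0 < b) {E : ℕ}
    (hne : ∀ C ∈ l, C.Nonempty) (hE : ∀ C ∈ l, ∀ x ∈ C, ∀ y ∈ C, torusDist x y ≤ E) :
    ∀ C ∈ boxPairStep b t l, ∀ x ∈ C, ∀ y ∈ C, torusDist x y ≤ 2 * E + (b - 1) := by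
  intro C hC
  rcases mem_or_eq_union_of_mem_boxPairStep hC with hC | ⟨a, ha, a', ha', hk, rfl⟩
  · exact fun x hx y hy => (hE C hC x hx y hy).trans (by omega)
  · exact torusDist_le_of_mem_union (hE a ha) (hE a' ha') (rep_mem (hne a ha))
      (rep_mem (hne a' ha')) (torusDist_le_of_div_eq hb (congrFun hk))

theorem mass_le_mass_boxPairStep_add [NeZero n] (hl : l.Pairwise Disjoint) :
    mass l ≤ mass (boxPairStep b t l) + (n / b + 1) ^ d * (t - 1) := by
  have hsum : mass (boxPairStep b t l) =
      ∑ k ∈ boxes n b d, mass (pairUp t (sortByCard (l.filter fun C => boxOf b (rep C) = k))) := by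
    simp [boxPairStep, mass, List.flatMap_def, List.sum_flatten]
  rw [mass_eq_sum_mass_filter (fun C => boxOf b (rep C)) (boxes n b d) l
    fun C _ => boxOf_mem_boxes b (rep C), hsum, ← card_boxes, ← smul_eq_mul, ← sum_const,
    ← sum_add_distrib]
  refine sum_le_sum fun k _ => ?_
  rw [← mass_eq_of_perm (sortByCard_perm _)]
  exact mass_le_mass_pairUp_add (pairwise_disjoint_sortByCard (hl.sublist List.filter_sublist))

theorem boxPairStep_of_le [NeZero n] (hb : n ≤ b) :
    boxPairStep b t l = pairUp t (sortByCard l) := by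
  simp only [boxPairStep, boxOf_of_le hb]
  rw [List.flatMap_eq_of_ne_eq_nil (nodup_toList _) (mem_toList.mpr (boxOf_of_le hb 0 ▸
    boxOf_mem_boxes b 0)) fun k hk => by simp [Ne.symm hk, sortByCard, pairUp]]
  simp

end Boxes

section Schedule

def side (D₀ : ℕ) : ℕ → ℕ
  | 0 => D₀
  | j + 1 => 4 * 6 ^ j * D₀

def diamBound (D₀ : ℕ) : ℕ → ℕ
  | 0 => 0
  | j + 1 => 6 ^ j * D₀

def minCard (j : ℕ) : ℕ := 2 ^ (j / 2)

variable {D₀ : ℕ}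

theorem side_pos (hD₀ : 0 < D₀) : ∀ j, 0 < side D₀ j
  | 0 => hD₀
  | j + 1 => by simp only [side]; positivity

theorem side_le_side_succ : ∀ j, side D₀ j ≤ side D₀ (j + 1)
  | 0 => by simp only [side]; omega
  | j + 1 => by simp only [side, pow_succ]; nlinarith [Nat.zero_le (6 ^ j * D₀)]

theorem side_succ_le_six_mul : ∀ j, side D₀ (j + 1) ≤ 6 * side D₀ j
  | 0 => by simp only [side]; omega
  | j + 1 => by simp only [side, pow_succ]; nlinarith [Nat.zero_le (6 ^ j * D₀)]

theorem le_side_of_lt (hD₀ : 0 < D₀) {n j : ℕ} (hj : n < j) : n ≤ side D₀ j := by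
  obtain ⟨j, rfl⟩ := Nat.exists_eq_add_of_lt hj
  have : n + j < 6 ^ (n + j) := Nat.lt_pow_self (by norm_num)
  simp only [side]
  nlinarith

theorem two_mul_diamBound_add_side_le (j : ℕ) :
    2 * diamBound D₀ j + (side D₀ j - 1) ≤ diamBound D₀ (j + 1) := by
  cases j with
  | zero => simp only [diamBound, side]; omega
  | succ j =>
    have h6 : 6 ^ (j + 1) * D₀ = 6 * (6 ^ j * D₀) := by ring
    have h4 : 4 * 6 ^ j * D₀ = 4 * (6 ^ j * D₀) := by ring
    simp only [diamBound, side, h6, h4]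
    omega

theorem minCard_succ_le (j : ℕ) : minCard (j + 1) ≤ 2 * minCard j := by
  unfold minCard
  rw [← pow_succ']
  exact Nat.pow_le_pow_right two_pos (by omega)

theorem minCard_add_two (j : ℕ) : minCard (j + 2) = 2 * minCard j := by
  simp [minCard, Nat.add_div_right, pow_succ, mul_comm]

theorem one_le_minCard (j : ℕ) : 1 ≤ minCard j :=
  Nat.one_le_two_pow

/-- Step `m + 1` uses `(n / side D₀ (m + 1) + 1) ^ 2` boxes, each losing fewer than
`minCard (m + 2)` points. -/
theorem boxLoss_le {n m : ℕ} (hm : side D₀ m < n) :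
    4 * D₀ ^ 2 * 2 ^ (m + 1) * ((n / side D₀ (m + 1) + 1) ^ 2 * (minCard (m + 2) - 1)) ≤
      49 * n ^ 2 := by
  set b := side D₀ (m + 1)
  have hboxes : (n / b + 1) * b ≤ 7 * n := by
    have := Nat.div_mul_le_self n b
    have := side_succ_le_six_mul (D₀ := D₀) m
    rw [add_mul]
    omega
  have hside : 2 * 2 ^ (m + 1) * D₀ ≤ b := by
    simp only [b, side, pow_succ]
    have := Nat.pow_le_pow_left (show 2 ≤ 6 by norm_num) m
    nlinarith [Nat.zero_le D₀]
  have hmin : minCard (m + 2) - 1 ≤ 2 ^ (m + 1) :=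
    (Nat.sub_le _ _).trans (Nat.pow_le_pow_right two_pos (by omega))
  calc 4 * D₀ ^ 2 * 2 ^ (m + 1) * ((n / b + 1) ^ 2 * (minCard (m + 2) - 1))
      ≤ 4 * D₀ ^ 2 * 2 ^ (m + 1) * ((n / b + 1) ^ 2 * 2 ^ (m + 1)) := by gcongr
    _ = ((n / b + 1) * (2 * 2 ^ (m + 1) * D₀)) ^ 2 := by ring
    _ ≤ ((n / b + 1) * b) ^ 2 := by gcongr
    _ ≤ (7 * n) ^ 2 := by gcongr
    _ = 49 * n ^ 2 := by ring

end Schedule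

section Clusters

variable {d n : ℕ} [NeZero n] {D₀ : ℕ} (A : Set (Fin d → ZMod n))

noncomputable def clusters (D₀ : ℕ) (A : Set (Fin d → ZMod n)) :
    ℕ → List (Finset (Fin d → ZMod n))
  | 0 => (Set.toFinite A).toFinset.toList.map ({·})
  | j + 1 => boxPairStep (side D₀ j) (minCard (j + 1)) (clusters D₀ A j)

theorem mem_clusters_zero {C : Finset (Fin d → ZMod n)} :
    C ∈ clusters D₀ A 0 ↔ ∃ x ∈ A, {x} = C := by
  simp [clusters]

theorem mass_clusters_zero : mass (clusters D₀ A 0) = A.ncard := by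
  simp [clusters, mass, Set.ncard_eq_toFinset_card A]

theorem pairwise_disjoint_clusters : ∀ j, (clusters D₀ A j).Pairwise Disjoint
  | 0 => List.pairwise_map.mpr <| (nodup_toList _).imp disjoint_singleton.mpr
  | j + 1 => pairwise_disjoint_boxPairStep (pairwise_disjoint_clusters j)

theorem minCard_le_card_of_mem_clusters : ∀ j, ∀ C ∈ clusters D₀ A j, minCard j ≤ C.card
  | 0 => by simp [mem_clusters_zero, minCard]
  | j + 1 => card_le_of_mem_boxPairStep (minCard_succ_le j) (pairwise_disjoint_clusters A j)
      (minCard_le_card_of_mem_clusters j)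

theorem nonempty_of_mem_clusters {j : ℕ} {C : Finset (Fin d → ZMod n)}
    (hC : C ∈ clusters D₀ A j) : C.Nonempty :=
  card_pos.mp <| (one_le_minCard j).trans (minCard_le_card_of_mem_clusters A j C hC)

theorem torusDist_le_of_mem_clusters (hD₀ : 0 < D₀) :
    ∀ j, ∀ C ∈ clusters D₀ A j, ∀ x ∈ C, ∀ y ∈ C, torusDist x y ≤ diamBound D₀ j
  | 0 => by simp [mem_clusters_zero, torusDist_self]
  | j + 1 => fun C hC x hx y hy =>
      (torusDist_le_of_mem_boxPairStep (side_pos hD₀ j) (fun _ => nonempty_of_mem_clusters A)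
        (torusDist_le_of_mem_clusters hD₀ j) C hC x hx y hy).trans
        (two_mul_diamBound_add_side_le j)

theorem mem_or_eq_union_of_mem_clusters_succ {j : ℕ} {C : Finset (Fin d → ZMod n)}
    (hC : C ∈ clusters D₀ A (j + 1)) :
    C ∈ clusters D₀ A j ∨ ∃ a ∈ clusters D₀ A j, ∃ a' ∈ clusters D₀ A j, C = a ∪ a' :=
  (mem_or_eq_union_of_mem_boxPairStep hC).imp_right
    fun ⟨a, ha, a', ha', _, h⟩ => ⟨a, ha, a', ha', h⟩

theorem clusters_succ_of_le {j : ℕ} (h : n ≤ side D₀ j) :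
    clusters D₀ A (j + 1) = pairUp (minCard (j + 1)) (sortByCard (clusters D₀ A j)) :=
  boxPairStep_of_le h

theorem exists_length_clusters_le_one (hD₀ : 0 < D₀) : ∃ j, (clusters D₀ A j).length ≤ 1 := by
  by_contra! hlong
  -- once the boxes cover the torus, every step halves the number of clusters
  have hshrink : ∀ k, (clusters D₀ A (n + 1 + k)).length + k ≤ (clusters D₀ A (n + 1)).length := by
    intro k
    induction k with
    | zero => simp
    | succ k ih =>
      have hhalf := length_pairUp_le (t := minCard (n + 1 + k + 1))
        (sortByCard (clusters D₀ A (n + 1 + k)))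
      rw [length_sortByCard, ← clusters_succ_of_le A (le_side_of_lt hD₀ (by omega))] at hhalf
      have := hlong (n + 1 + k)
      rw [show n + 1 + (k + 1) = n + 1 + k + 1 by omega]
      omega
  have := hshrink (clusters D₀ A (n + 1)).length
  have := hlong (n + 1 + (clusters D₀ A (n + 1)).length)
  omega

theorem mass_clusters_add_two {m : ℕ} (hm : n ≤ side D₀ m)
    (hlen : 2 ≤ (clusters D₀ A m).length) :
    mass (clusters D₀ A (m + 2)) = mass (clusters D₀ A (m + 1)) := by
  -- the first merged pair of step `m` is already large enough for step `m + 1`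
  have hbig : ∃ C ∈ clusters D₀ A (m + 1), minCard (m + 2) ≤ C.card := by
    have hdisj := pairwise_disjoint_sortByCard (pairwise_disjoint_clusters (D₀ := D₀) A m)
    have hperm := sortByCard_perm (clusters D₀ A m)
    rw [clusters_succ_of_le A hm]
    rcases hs : sortByCard (clusters D₀ A m) with _ | ⟨a, _ | ⟨b, rest⟩⟩
    · simp [← hperm.length_eq, hs] at hlen
    · simp [← hperm.length_eq, hs] at hlen
    rw [hs] at hdisj hperm
    simp only [List.pairwise_cons, List.mem_cons, forall_eq_or_imp] at hdisj
    refine ⟨a ∪ b, List.mem_cons_self .., ?_⟩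
    rw [card_union_of_disjoint hdisj.1.1, minCard_add_two]
    have := minCard_le_card_of_mem_clusters A m a (hperm.subset (by simp))
    have := minCard_le_card_of_mem_clusters A m b (hperm.subset (by simp))
    omega
  rw [clusters_succ_of_le A (hm.trans (side_le_side_succ m))]
  exact mass_pairUp_sortByCard (pairwise_disjoint_clusters A _) hbig

noncomputable def clusterHierarchy (hD₀ : 0 < D₀) {J : ℕ} (hJ : (clusters D₀ A J).length = 1) :
    DormitoryHierarchy d n 1 (fun j => 6 ^ j * D₀) A :=
  .ofLists (clusters D₀ A) J one_pos
    (fun C hC => by obtain ⟨x, hx, rfl⟩ := (mem_clusters_zero A).mp hC; simpa using hx)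
    (pairwise_disjoint_clusters A) (by simpa [minCard] using minCard_le_card_of_mem_clusters A)
    (fun j C hC => (mem_or_eq_union_of_mem_clusters_succ A hC).imp_right fun h =>
      ⟨torusDiam_le (torusDist_le_of_mem_clusters A hD₀ (j + 1) C hC), h⟩)
    hJ

theorem ncard_level_clusterHierarchy (hD₀ : 0 < D₀) {J : ℕ}
    (hJ : (clusters D₀ A J).length = 1) :
    ((clusterHierarchy A hD₀ hJ).level (clusterHierarchy A hD₀ hJ).J).ncard =
      mass (clusters D₀ A J) := by
  obtain ⟨C, hC⟩ := List.length_eq_one_iff.mp hJ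
  simp [clusterHierarchy, DormitoryHierarchy.ofLists, hC]

theorem exists_eq_singleton_of_mem_part_zero (hD₀ : 0 < D₀) {J : ℕ}
    (hJ : (clusters D₀ A J).length = 1) :
    ∀ S ∈ (clusterHierarchy A hD₀ hJ).part 0, ∃ x, S = {x} := by
  rintro _ ⟨C, hC, rfl⟩
  obtain ⟨x, -, rfl⟩ := (mem_clusters_zero A).mp hC
  exact ⟨x, coe_singleton x⟩

end Clusters

section Mass

variable {n : ℕ} [NeZero n] {D₀ : ℕ} (A : Set (Fin 2 → ZMod n))

theorem mass_clusters_le_mass_succ_add (hD₀ : 0 < D₀) {i : ℕ}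
    (hlen : ∀ m < i, 2 ≤ (clusters D₀ A m).length) :
    (mass (clusters D₀ A i) : ℝ) ≤
      mass (clusters D₀ A (i + 1)) + 49 / 4 * ((n : ℝ) ^ 2 / (D₀ : ℝ) ^ 2) * (1 / 2) ^ i := by
  have hloss_nonneg : 0 ≤ 49 / 4 * ((n : ℝ) ^ 2 / (D₀ : ℝ) ^ 2) * (1 / 2) ^ i := by positivity
  rcases i with _ | m
  · have := mass_le_mass_boxPairStep_add (b := side D₀ 0) (t := minCard 1)
      (pairwise_disjoint_clusters (D₀ := D₀) A 0)
    simp only [minCard, Nat.reduceDiv, pow_zero, tsub_self, mul_zero, add_zero] at this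
    have : (mass (clusters D₀ A 0) : ℝ) ≤ mass (clusters D₀ A 1) := by exact_mod_cast this
    linarith
  by_cases hm : n ≤ side D₀ m
  · rw [mass_clusters_add_two A hm (hlen m (by omega))]
    linarith
  set L := (n / side D₀ (m + 1) + 1) ^ 2 * (minCard (m + 2) - 1)
  have hstep : mass (clusters D₀ A (m + 1)) ≤ mass (clusters D₀ A (m + 2)) + L :=
    mass_le_mass_boxPairStep_add (pairwise_disjoint_clusters A (m + 1))
  have hL : (4 * D₀ ^ 2 * 2 ^ (m + 1) : ℝ) * L ≤ 49 * n ^ 2 := by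
    exact_mod_cast boxLoss_le (not_le.mp hm)
  have hL' : (L : ℝ) ≤ 49 / 4 * ((n : ℝ) ^ 2 / (D₀ : ℝ) ^ 2) * (1 / 2) ^ (m + 1) := by
    rw [show 49 / 4 * ((n : ℝ) ^ 2 / (D₀ : ℝ) ^ 2) * (1 / 2) ^ (m + 1) =
        49 * n ^ 2 / (4 * D₀ ^ 2 * 2 ^ (m + 1)) by rw [one_div_pow]; field_simp,
      le_div_iff₀ (by positivity)]
    linarith
  have : (mass (clusters D₀ A (m + 1)) : ℝ) ≤ mass (clusters D₀ A (m + 2)) + L := by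
    exact_mod_cast hstep
  linarith

theorem ncard_sub_le_mass_clusters (hD₀ : 0 < D₀) {J : ℕ}
    (hlen : ∀ i < J, 2 ≤ (clusters D₀ A i).length) :
    (A.ncard : ℝ) - 49 / 2 * ((n : ℝ) ^ 2 / (D₀ : ℝ) ^ 2) ≤ mass (clusters D₀ A J) := by
  set X := (n : ℝ) ^ 2 / (D₀ : ℝ) ^ 2
  have hloss : (A.ncard : ℝ) - mass (clusters D₀ A J) ≤ 49 / 4 * X * 2 :=
    calc (A.ncard : ℝ) - mass (clusters D₀ A J)
        = ∑ i ∈ range J, ((mass (clusters D₀ A i) : ℝ) - mass (clusters D₀ A (i + 1))) := by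
          rw [sum_range_sub', mass_clusters_zero]
      _ ≤ ∑ i ∈ range J, 49 / 4 * X * (1 / 2) ^ i := sum_le_sum fun i hi => by
          linarith [mass_clusters_le_mass_succ_add A hD₀
            fun m hm => hlen m (hm.trans (mem_range.mp hi))]
      _ = 49 / 4 * X * ∑ i ∈ range J, (1 / 2 : ℝ) ^ i := by rw [mul_sum]
      _ ≤ 49 / 4 * X * 2 := by gcongr; exact sum_geometric_two_le J
  linarith

end Mass

end Dormitory

open Dormitory

/-- **Dormitory hierarchy with singleton clusters at level 0 (low sleep rate, `d = 2`).**
Let `D₀ ≥ 1` and `D j = 6^j D₀`.  For every `n ≥ 1` and every `A ⊆ (ℤ/nℤ)²` with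
`|A| ≥ 288 n² / D₀²`, there exists a `(1, D)`-dormitory hierarchy `(A_j, 𝒞_j)_{j ≤ J}`
on `A` with `|A_J| ≥ |A| − 144 n² / D₀²` in which `𝒞₀` contains only singletons. -/
theorem dormitory_hierarchy_singletons
    (D₀ : ℕ) (hD₀ : 1 ≤ D₀) (D : ℕ → ℕ) (hD : ∀ j, D j = 6 ^ j * D₀)
    (n : ℕ) (hn : 1 ≤ n) (A : Set (Fin 2 → ZMod n))
    (hcard : 288 * (n : ℝ) ^ 2 / (D₀ : ℝ) ^ 2 ≤ (A.ncard : ℝ)) :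
    ∃ H : DormitoryHierarchy 2 n 1 D A,
      (A.ncard : ℝ) - 144 * (n : ℝ) ^ 2 / (D₀ : ℝ) ^ 2 ≤ ((H.level H.J).ncard : ℝ) ∧
      ∀ C ∈ H.part 0, ∃ x, C = {x} := by
  have : NeZero n := ⟨by omega⟩
  obtain rfl : D = fun j => 6 ^ j * D₀ := funext hD
  have hstop := exists_length_clusters_le_one A hD₀
  have hmass := ncard_sub_le_mass_clusters A hD₀ fun i hi => by
    have := Nat.find_min hstop hi
    omega
  have hX : 0 < (n : ℝ) ^ 2 / (D₀ : ℝ) ^ 2 := by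
    have : (0 : ℝ) < n := by exact_mod_cast hn
    have : (0 : ℝ) < D₀ := by exact_mod_cast hD₀
    positivity
  have hlen : (clusters D₀ A (Nat.find hstop)).length = 1 := by
    refine le_antisymm (Nat.find_spec hstop) (List.length_pos_iff.mpr fun h => ?_)
    rw [h, mass_nil, Nat.cast_zero] at hmass
    linarith [mul_div_assoc (288 : ℝ) ((n : ℝ) ^ 2) ((D₀ : ℝ) ^ 2)]
  refine ⟨clusterHierarchy A hD₀ hlen, ?_, exists_eq_singleton_of_mem_part_zero A hD₀ hlen⟩
  rw [ncard_level_clusterHierarchy]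
  linarith [mul_div_assoc (144 : ℝ) ((n : ℝ) ^ 2) ((D₀ : ℝ) ^ 2)]
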